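/- On ℝ with the quadratic cost c(x,y) = |x-y|², if a is an atomless probability measure with finite second moment and b has finite second moment, then the monotone map M = F_b^{-1} ∘ F_a is optimal among all maps pushing a to b: for every measurable T with T_#a = b, ∫|M(x)-x|² da(x) ≤ ∫|T(x)-x|² da(x). -/

import Mathlib

open MeasureTheory Set Filter Topology
open scoped ENNReal

/-- Cumulative distribution function of a measure on `ℝ`. -/
noncomputable def cdfF (μ : Measure ℝ) (x : ℝ) : ℝ := (μ (Set.Iic x)).toReal

/-- Generalized inverse (quantile function) of the CDF of a measure on `ℝ`. -/
noncomputable def quantile (μ : Measure ℝ) (u : ℝ) : ℝ := sInf {x : ℝ | u ≤ cdfF μ x}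

section Basics

variable (μ : Measure ℝ) [IsProbabilityMeasure μ]

lemma mg_cdfF_nonneg (x : ℝ) : 0 ≤ cdfF μ x := ENNReal.toReal_nonneg

lemma mg_cdfF_le_one (x : ℝ) : cdfF μ x ≤ 1 := by
  have h := measure_mono (μ := μ) (subset_univ (Set.Iic x))
  simpa [cdfF] using ENNReal.toReal_mono (by simp) h

lemma mg_cdfF_mono : Monotone (cdfF μ) := by
  intro x y hxy
  exact ENNReal.toReal_mono (measure_ne_top μ _) (measure_mono (Iic_subset_Iic.2 hxy))

lemma mg_measurable_cdfF : Measurable (cdfF μ) := (mg_cdfF_mono μ).measurable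

lemma mg_Iic_eq (x : ℝ) : μ (Set.Iic x) = ENNReal.ofReal (cdfF μ x) :=
  (ENNReal.ofReal_toReal (measure_ne_top μ _)).symm

lemma mg_exists_cdf_lt {u : ℝ} (hu : 0 < u) : ∃ z : ℝ, cdfF μ z < u := by
  by_contra h
  push_neg at h
  have h2 : ∀ n : ℕ, ENNReal.ofReal u ≤ μ (Set.Iic (-(n:ℝ))) := by
    intro n
    rw [mg_Iic_eq]
    exact ENNReal.ofReal_le_ofReal (h _)
  have hInter : ⋂ n : ℕ, Set.Iic (-(n:ℝ)) = ∅ := by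
    ext y
    simp only [mem_iInter, mem_Iic, mem_empty_iff_false, iff_false, not_forall, not_le]
    obtain ⟨n, hn⟩ := exists_nat_gt (-y)
    exact ⟨n, by linarith⟩
  have hT : Tendsto (fun n : ℕ => μ (Set.Iic (-(n:ℝ)))) atTop (𝓝 (μ (⋂ n : ℕ, Set.Iic (-(n:ℝ))))) := by
    refine tendsto_measure_iInter_atTop (fun n => measurableSet_Iic.nullMeasurableSet) ?_ ⟨0, measure_ne_top μ _⟩
    intro m n hmn
    exact Iic_subset_Iic.2 (by exact_mod_cast neg_le_neg (Nat.cast_le.2 hmn))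
  rw [hInter] at hT
  simp only [measure_empty] at hT
  have := ge_of_tendsto' hT h2
  simp only [le_zero_iff, ENNReal.ofReal_eq_zero] at this
  linarith

lemma mg_exists_le_cdf {u : ℝ} (hu : u < 1) : ∃ z : ℝ, u ≤ cdfF μ z := by
  by_contra h
  push_neg at h
  have hUnion : ⋃ n : ℕ, Set.Iic ((n:ℝ)) = univ := by
    ext y
    simp only [mem_iUnion, mem_Iic, mem_univ, iff_true]
    exact exists_nat_ge y
  have h2 : ∀ n : ℕ, μ (Set.Iic ((n:ℝ))) ≤ ENNReal.ofReal u := by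
    intro n
    rw [mg_Iic_eq]
    exact ENNReal.ofReal_le_ofReal (h _).le
  have hμ : μ (⋃ n : ℕ, Set.Iic ((n:ℝ))) = ⨆ n : ℕ, μ (Set.Iic ((n:ℝ))) := by
    refine Directed.measure_iUnion ?_
    exact Monotone.directed_le fun m n hmn => Iic_subset_Iic.2 (by exact_mod_cast hmn)
  rw [hUnion, measure_univ] at hμ
  have : (1 : ℝ≥0∞) ≤ ENNReal.ofReal u := hμ.le.trans (iSup_le h2)
  rw [show (1:ℝ≥0∞) = ENNReal.ofReal 1 by simp] at this
  rcases ENNReal.ofReal_le_ofReal_iff'.1 this with h' | h' <;> linarith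

lemma mg_le_cdf_sInf {u : ℝ} (hne : {x : ℝ | u ≤ cdfF μ x}.Nonempty)
    (hbd : BddBelow {x : ℝ | u ≤ cdfF μ x}) : u ≤ cdfF μ (sInf {x : ℝ | u ≤ cdfF μ x}) := by
  set S := {x : ℝ | u ≤ cdfF μ x} with hS
  obtain ⟨seq, hanti, htend, hmem⟩ := exists_seq_tendsto_sInf hne hbd
  have hI : ⋂ n : ℕ, Set.Iic (seq n) = Set.Iic (sInf S) := by
    ext y
    simp only [mem_iInter, mem_Iic]
    constructor
    · intro h
      exact ge_of_tendsto' htend h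
    · intro h n
      exact h.trans (csInf_le hbd (hmem n))
  have hT : Tendsto (fun n : ℕ => μ (Set.Iic (seq n))) atTop (𝓝 (μ (⋂ n : ℕ, Set.Iic (seq n)))) := by
    refine tendsto_measure_iInter_atTop (fun n => measurableSet_Iic.nullMeasurableSet)
      (fun m n hmn => Iic_subset_Iic.2 (hanti hmn)) ⟨0, measure_ne_top μ _⟩
  rw [hI] at hT
  have h2 : ∀ n : ℕ, ENNReal.ofReal u ≤ μ (Set.Iic (seq n)) := by
    intro n
    rw [mg_Iic_eq]
    exact ENNReal.ofReal_le_ofReal (hmem n)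
  have h3 : ENNReal.ofReal u ≤ μ (Set.Iic (sInf S)) := ge_of_tendsto' hT h2
  rw [mg_Iic_eq] at h3
  have := (ENNReal.ofReal_le_ofReal_iff (mg_cdfF_nonneg μ _)).1 h3
  exact this

lemma mg_quantile_le_iff {u y : ℝ} (h0 : 0 < u) (h1 : u < 1) :
    quantile μ u ≤ y ↔ u ≤ cdfF μ y := by
  set S := {x : ℝ | u ≤ cdfF μ x} with hS
  have hne : S.Nonempty := mg_exists_le_cdf μ h1
  have hbd : BddBelow S := by
    obtain ⟨z, hz⟩ := mg_exists_cdf_lt μ h0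
    refine ⟨z, fun w hw => ?_⟩
    by_contra hzw
    push_neg at hzw
    exact absurd (hw.trans (mg_cdfF_mono μ hzw.le)) (not_le.2 hz)
  constructor
  · intro h
    have hmem : sInf S ∈ S := mg_le_cdf_sInf μ hne hbd
    exact hmem.trans (mg_cdfF_mono μ h)
  · intro h
    exact csInf_le hbd h

lemma mg_quantile_mono {u u' : ℝ} (h0 : 0 < u) (h1 : u' < 1) (h : u ≤ u') :
    quantile μ u ≤ quantile μ u' := by
  refine csInf_le_csInf ?_ (mg_exists_le_cdf μ h1) ?_
  · obtain ⟨z, hz⟩ := mg_exists_cdf_lt μ h0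
    refine ⟨z, fun w hw => ?_⟩
    by_contra hzw
    push_neg at hzw
    exact absurd (hw.trans (mg_cdfF_mono μ hzw.le)) (not_le.2 hz)
  · intro w hw
    exact le_trans h hw

end Basics
section Atomless

variable (a : Measure ℝ) [IsProbabilityMeasure a] [NullSingletonClass a]

lemma mg_Iio_eq_Iic (c : ℝ) : a (Set.Iio c) = a (Set.Iic c) :=
  measure_congr (Iio_ae_eq_Iic)

lemma mg_Iio_union (c : ℝ) : Set.Iio c = ⋃ n : ℕ, Set.Iic (c - 1/(n+1)) := by
  ext y
  simp only [mem_Iio, mem_iUnion, mem_Iic]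
  constructor
  · intro h
    obtain ⟨n, hn⟩ := exists_nat_one_div_lt (show (0:ℝ) < c - y by linarith)
    exact ⟨n, by push_cast at hn ⊢; linarith⟩
  · rintro ⟨n, hn⟩
    have : (0:ℝ) < 1/(n+1) := by positivity
    linarith

lemma mg_measure_Iio_le {c v : ℝ} (h : ∀ z, z < c → cdfF a z ≤ v) :
    a (Set.Iio c) ≤ ENNReal.ofReal v := by
  rw [mg_Iio_union c]
  have hdir : Directed (· ⊆ ·) (fun n : ℕ => Set.Iic (c - 1/(n+1))) := by
    refine Monotone.directed_le fun m n hmn => Iic_subset_Iic.2 ?_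
    have : (1:ℝ)/(n+1) ≤ 1/(m+1) := by
      apply one_div_le_one_div_of_le (by positivity)
      exact_mod_cast by omega
    linarith
  rw [hdir.measure_iUnion]
  refine iSup_le fun n => ?_
  rw [mg_Iic_eq]
  refine ENNReal.ofReal_le_ofReal (h _ ?_)
  have : (0:ℝ) < 1/(n+1) := by positivity
  linarith

lemma mg_measure_cdf_le {v : ℝ} (h0 : 0 ≤ v) (h1 : v ≤ 1) :
    a {x : ℝ | cdfF a x ≤ v} = ENNReal.ofReal v := by
  set S := {x : ℝ | cdfF a x ≤ v} with hSdef
  have hlow : IsLowerSet S := fun x y hyx hx => le_trans (mg_cdfF_mono a hyx) hx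
  rcases eq_or_lt_of_le h1 with hv1 | hv1
  · have : S = univ := eq_univ_of_forall fun x => by
      simp only [hSdef, mem_setOf_eq, hv1]; exact mg_cdfF_le_one a x
    rw [this, measure_univ, hv1]
    simp
  -- v < 1
  refine le_antisymm ?_ ?_
  · -- upper bound
    by_cases hbd : BddAbove S
    · rcases S.eq_empty_or_nonempty with hS | hS
      · simp [hS]
      · set c := sSup S with hc
        have hsub : S ⊆ Set.Iio c ∪ {c} := by
          intro x hx
          rcases eq_or_lt_of_le (le_csSup hbd hx) with h | h
          · exact Or.inr (by simp [h, hc])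
          · exact Or.inl h
        calc a S ≤ a (Set.Iio c ∪ {c}) := measure_mono hsub
          _ ≤ a (Set.Iio c) + a {c} := measure_union_le _ _
          _ = a (Set.Iio c) := by simp [measure_singleton]
          _ ≤ ENNReal.ofReal v := by
            refine mg_measure_Iio_le a fun z hz => ?_
            obtain ⟨x, hxS, hzx⟩ := exists_lt_of_lt_csSup hS hz
            exact le_trans (mg_cdfF_mono a hzx.le) hxS
    · have hSuniv : S = univ := by
        refine eq_univ_of_forall fun y => ?_
        obtain ⟨x, hxS, hyx⟩ := not_bddAbove_iff.1 hbd y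
        exact hlow hyx.le hxS
      rw [hSuniv, measure_univ]
      obtain ⟨z, hz⟩ := mg_exists_le_cdf a hv1
      -- everything has cdf ≤ v, but also cdf tends to 1 > v : contradiction unless 1 ≤ ofReal v
      exfalso
      have h2 : ∀ n : ℕ, cdfF a n ≤ v := fun n => by
        have : (n:ℝ) ∈ S := hSuniv ▸ mem_univ _
        exact this
      -- Now 1 = μ univ = sup of cdf ≤ v < 1
      have hUnion : ⋃ n : ℕ, Set.Iic ((n:ℝ)) = univ := by
        ext y
        simp only [mem_iUnion, mem_Iic, mem_univ, iff_true]
        exact exists_nat_ge y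
      have hμ : a (⋃ n : ℕ, Set.Iic ((n:ℝ))) = ⨆ n : ℕ, a (Set.Iic ((n:ℝ))) := by
        refine Directed.measure_iUnion ?_
        exact Monotone.directed_le fun m n hmn => Iic_subset_Iic.2 (by exact_mod_cast hmn)
      rw [hUnion, measure_univ] at hμ
      have : (1 : ℝ≥0∞) ≤ ENNReal.ofReal v := by
        rw [hμ]
        refine iSup_le fun n => ?_
        rw [mg_Iic_eq]
        exact ENNReal.ofReal_le_ofReal (h2 n)
      rw [show (1:ℝ≥0∞) = ENNReal.ofReal 1 by simp] at this
      rcases ENNReal.ofReal_le_ofReal_iff'.1 this with h' | h' <;> linarith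
  · -- lower bound
    rcases eq_or_lt_of_le h0 with hv0 | hv0
    · simp [← hv0]
    -- 0 < v < 1
    set S' := {x : ℝ | v ≤ cdfF a x} with hS'
    have hne : S'.Nonempty := mg_exists_le_cdf a hv1
    have hbd : BddBelow S' := by
      obtain ⟨z, hz⟩ := mg_exists_cdf_lt a hv0
      refine ⟨z, fun w hw => ?_⟩
      by_contra hzw
      push_neg at hzw
      exact absurd (hw.trans (mg_cdfF_mono a hzw.le)) (not_le.2 hz)
    set c := sInf S' with hc
    have hge : v ≤ cdfF a c := mg_le_cdf_sInf a hne hbd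
    have hle : cdfF a c ≤ v := by
      have h2 : a (Set.Iio c) ≤ ENNReal.ofReal v := by
        refine mg_measure_Iio_le a fun z hz => ?_
        by_contra hzv
        push_neg at hzv
        exact absurd (csInf_le hbd (le_of_lt hzv)) (not_le.2 hz)
      rw [mg_Iio_eq_Iic, mg_Iic_eq] at h2
      exact (ENNReal.ofReal_le_ofReal_iff h0).1 h2
    have hcv : cdfF a c = v := le_antisymm hle hge
    have hsub : Set.Iic c ⊆ S := fun y hy => by
      simp only [hSdef, mem_setOf_eq]
      exact le_trans (mg_cdfF_mono a hy) hcv.le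
    calc ENNReal.ofReal v = a (Set.Iic c) := by rw [mg_Iic_eq, hcv]
      _ ≤ a S := measure_mono hsub

lemma mg_null_bot : a {x : ℝ | cdfF a x ≤ 0} = 0 := by
  simpa using mg_measure_cdf_le a le_rfl zero_le_one

lemma mg_null_top : a {x : ℝ | 1 ≤ cdfF a x} = 0 := by
  have h : ∀ n : ℕ, a {x : ℝ | 1 ≤ cdfF a x} ≤ ENNReal.ofReal (1/(n+1)) := by
    intro n
    have h01 : (0:ℝ) ≤ 1 - 1/(n+1) := by
      have h1 : (1:ℝ)/(n+1) ≤ 1 := by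
        refine div_le_one_of_le₀ (by { have := n.cast_nonneg (α:=ℝ); linarith }) (by positivity)
      linarith
    have hmeas : MeasurableSet {x : ℝ | cdfF a x ≤ 1 - 1/(n+1)} :=
      measurableSet_le (mg_measurable_cdfF a) measurable_const
    have hv := mg_measure_cdf_le a h01 (by
      have : (0:ℝ) < 1/(n+1) := by positivity
      linarith)
    have hsub : {x : ℝ | 1 ≤ cdfF a x} ⊆ {x : ℝ | cdfF a x ≤ 1 - 1/(n+1)}ᶜ := by
      intro x hx
      simp only [mem_compl_iff, mem_setOf_eq, not_le]
      have : (0:ℝ) < 1/(n+1) := by positivity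
      have hx' : (1:ℝ) ≤ cdfF a x := hx
      linarith
    refine (measure_mono hsub).trans ?_
    rw [measure_compl hmeas (measure_ne_top a _), measure_univ, hv]
    rw [tsub_le_iff_right]
    calc (1:ℝ≥0∞) = ENNReal.ofReal ((1/(n+1)) + (1 - 1/(n+1))) := by norm_num
      _ ≤ _ := ENNReal.ofReal_add_le
  have htend : Tendsto (fun n : ℕ => ENNReal.ofReal (1/(n+1))) atTop (𝓝 0) := by
    rw [show (0:ℝ≥0∞) = ENNReal.ofReal 0 by simp]
    refine ENNReal.tendsto_ofReal ?_
    exact tendsto_one_div_add_atTop_nhds_zero_nat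
  have := le_of_tendsto_of_tendsto' (f := fun _ : ℕ => a {x : ℝ | 1 ≤ cdfF a x})
    tendsto_const_nhds htend h
  simpa using this

end Atomless
lemma mg_isLowerSet_measurableSet {L : Set ℝ} (h : IsLowerSet L) : MeasurableSet L := by
  rcases L.eq_empty_or_nonempty with hL | hL
  · simp [hL]
  by_cases hbd : BddAbove L
  · by_cases hc : sSup L ∈ L
    · have : L = Set.Iic (sSup L) := by
        ext x
        exact ⟨fun hx => le_csSup hbd hx, fun hx => h hx hc⟩
      rw [this]; exact measurableSet_Iic
    · have : L = Set.Iio (sSup L) := by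
        ext x
        constructor
        · intro hx
          rcases eq_or_lt_of_le (le_csSup hbd hx) with he | hlt
          · exact absurd (he ▸ hx) hc
          · exact hlt
        · intro hx
          obtain ⟨y, hyL, hxy⟩ := exists_lt_of_lt_csSup hL hx
          exact h hxy.le hyL
      rw [this]; exact measurableSet_Iio
  · have : L = univ := by
      refine eq_univ_of_forall fun y => ?_
      obtain ⟨x, hxL, hyx⟩ := not_bddAbove_iff.1 hbd y
      exact h hyx.le hxL
    rw [this]; exact MeasurableSet.univ

lemma mg_isUpperSet_aux {V : Set ℝ} (h : IsUpperSet V) (s : ℝ) : V ⊆ Set.Ioi s ∨ Set.Ioi s ⊆ V :=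
  (IsUpperSet.total h (isUpperSet_Ioi s)).imp id id

section MapM

variable (a b : Measure ℝ) [IsProbabilityMeasure a] [IsProbabilityMeasure b] [NullSingletonClass a]

/-- The good set on which everything is nice. -/
def mgU (a : Measure ℝ) : Set ℝ := {x : ℝ | 0 < cdfF a x ∧ cdfF a x < 1}

lemma mg_measU : MeasurableSet (mgU a) :=
  (measurableSet_lt measurable_const (mg_measurable_cdfF a)).inter
    (measurableSet_lt (mg_measurable_cdfF a) measurable_const)

lemma mg_U_compl_null : a (mgU a)ᶜ = 0 := by
  have h1 : (mgU a)ᶜ ⊆ {x : ℝ | cdfF a x ≤ 0} ∪ {x : ℝ | 1 ≤ cdfF a x} := by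
    intro x hx
    simp only [mgU, mem_compl_iff, mem_setOf_eq, not_and_or, not_lt] at hx
    rcases hx with h | h
    · exact Or.inl h
    · exact Or.inr h
  refine measure_mono_null h1 ?_
  refine measure_union_null (mg_null_bot a) (mg_null_top a)

lemma mg_M_monoOn : MonotoneOn (fun x => quantile b (cdfF a x)) (mgU a) := by
  intro x hx y hy hxy
  refine mg_quantile_mono b hx.1 hy.2 (mg_cdfF_mono a hxy)

lemma mg_measurable_M : Measurable (fun x => quantile b (cdfF a x)) := by
  refine measurable_of_Iio fun c => ?_
  set M : ℝ → ℝ := fun x => quantile b (cdfF a x) with hM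
  set L : Set ℝ := {y : ℝ | ∃ x, (x ∈ mgU a ∧ M x < c) ∧ y ≤ x} with hL
  have hLlow : IsLowerSet L := by
    intro p q hqp hp
    obtain ⟨x, hx, hpx⟩ := hp
    exact ⟨x, hx, hqp.trans hpx⟩
  set A0 : Set ℝ := {x : ℝ | cdfF a x ≤ 0} with hA0
  set A1 : Set ℝ := {x : ℝ | 1 ≤ cdfF a x} with hA1
  have key : M ⁻¹' Set.Iio c =
      (mgU a ∩ L) ∪ ((if quantile b 0 < c then A0 else ∅) ∪ (if quantile b 1 < c then A1 else ∅)) := by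
    ext x
    simp only [mem_preimage, mem_Iio, mem_union, mem_inter_iff]
    constructor
    · intro hx
      rcases lt_trichotomy (cdfF a x) 1 with h1 | h1 | h1
      · rcases lt_or_ge 0 (cdfF a x) with h0 | h0
        · exact Or.inl ⟨⟨h0, h1⟩, ⟨x, ⟨⟨h0, h1⟩, hx⟩, le_rfl⟩⟩
        · have hx0 : cdfF a x = 0 := le_antisymm h0 (mg_cdfF_nonneg a x)
          have : quantile b 0 < c := by rw [← hx0]; exact hx
          refine Or.inr (Or.inl ?_)
          rw [if_pos this]
          exact le_of_eq hx0
      · have : quantile b 1 < c := by rw [← h1]; exact hx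
        refine Or.inr (Or.inr ?_)
        rw [if_pos this]
        exact le_of_eq h1.symm
      · exact absurd h1 (not_lt.2 (mg_cdfF_le_one a x))
    · intro hx
      rcases hx with ⟨hxU, x', ⟨hx'U, hx'c⟩, hxx'⟩ | hx
      · exact lt_of_le_of_lt (mg_M_monoOn a b hxU hx'U hxx') hx'c
      · rcases hx with hx | hx
        · by_cases hq : quantile b 0 < c
          · rw [if_pos hq] at hx
            have hx0 : cdfF a x = 0 := le_antisymm hx (mg_cdfF_nonneg a x)
            show quantile b (cdfF a x) < c
            rw [hx0]; exact hq
          · rw [if_neg hq] at hx; exact absurd hx (notMem_empty x)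
        · by_cases hq : quantile b 1 < c
          · rw [if_pos hq] at hx
            have hx1 : cdfF a x = 1 := le_antisymm (mg_cdfF_le_one a x) hx
            show quantile b (cdfF a x) < c
            rw [hx1]; exact hq
          · rw [if_neg hq] at hx; exact absurd hx (notMem_empty x)
  rw [key]
  have hm0 : MeasurableSet A0 := measurableSet_le (mg_measurable_cdfF a) measurable_const
  have hm1 : MeasurableSet A1 := measurableSet_le measurable_const (mg_measurable_cdfF a)
  refine ((mg_measU a).inter (mg_isLowerSet_measurableSet hLlow)).union
    (MeasurableSet.union ?_ ?_) <;> split_ifs <;>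
    first | exact hm0 | exact hm1 | exact MeasurableSet.empty

lemma mg_map_M : a.map (fun x => quantile b (cdfF a x)) = b := by
  set M : ℝ → ℝ := fun x => quantile b (cdfF a x) with hM
  refine Measure.ext_of_Iic _ _ fun y => ?_
  rw [Measure.map_apply (mg_measurable_M a b) measurableSet_Iic]
  have hae : (M ⁻¹' Set.Iic y : Set ℝ) =ᵐ[a] ({x : ℝ | cdfF a x ≤ cdfF b y} : Set ℝ) := by
    have hsub : ((M ⁻¹' Set.Iic y) \ {x : ℝ | cdfF a x ≤ cdfF b y}) ∪
        ({x : ℝ | cdfF a x ≤ cdfF b y} \ (M ⁻¹' Set.Iic y)) ⊆ (mgU a)ᶜ := by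
      rintro x (⟨hx1, hx2⟩ | ⟨hx1, hx2⟩)
      · simp only [mem_compl_iff, mgU, mem_setOf_eq, not_and_or, not_lt]
        by_contra hU
        push_neg at hU
        have hiff := mg_quantile_le_iff b (u := cdfF a x) (y := y) hU.1 hU.2
        simp only [mem_preimage, mem_Iic, mem_setOf_eq] at hx1 hx2
        exact hx2 (hiff.1 hx1)
      · simp only [mem_compl_iff, mgU, mem_setOf_eq, not_and_or, not_lt]
        by_contra hU
        push_neg at hU
        have hiff := mg_quantile_le_iff b (u := cdfF a x) (y := y) hU.1 hU.2
        simp only [mem_preimage, mem_Iic, mem_setOf_eq] at hx1 hx2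
        exact hx2 (hiff.2 hx1)
    have hnull : a (((M ⁻¹' Set.Iic y) \ {x : ℝ | cdfF a x ≤ cdfF b y}) ∪
        ({x : ℝ | cdfF a x ≤ cdfF b y} \ (M ⁻¹' Set.Iic y))) = 0 :=
      measure_mono_null hsub (mg_U_compl_null a)
    rw [MeasureTheory.ae_eq_set]
    constructor
    · exact measure_mono_null subset_union_left hnull
    · exact measure_mono_null subset_union_right hnull
  rw [measure_congr hae, mg_measure_cdf_le a (mg_cdfF_nonneg b y) (mg_cdfF_le_one b y),
    ← mg_Iic_eq]

lemma mg_min_inter (s t : ℝ) :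
    a (Set.Ioi s ∩ (fun x => quantile b (cdfF a x)) ⁻¹' Set.Ioi t) =
      min (a (Set.Ioi s)) (b (Set.Ioi t)) := by
  set M : ℝ → ℝ := fun x => quantile b (cdfF a x) with hM
  set W : Set ℝ := M ⁻¹' Set.Ioi t with hW
  set V : Set ℝ := {x' : ℝ | ∃ x, (x ∈ W ∩ mgU a) ∧ x ≤ x'} with hV
  have hVup : IsUpperSet V := by
    intro p q hpq hp
    obtain ⟨x, hx, hxp⟩ := hp
    exact ⟨x, hx, hxp.trans hpq⟩
  have hWV : ((W \ V) ∪ (V \ W)) ⊆ (mgU a)ᶜ := by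
    rintro x (⟨hx1, hx2⟩ | ⟨hx1, hx2⟩)
    · intro hxU
      exact hx2 ⟨x, ⟨hx1, hxU⟩, le_rfl⟩
    · intro hxU
      obtain ⟨x', ⟨hx'W, hx'U⟩, hx'x⟩ := hx1
      refine hx2 ?_
      have : M x' ≤ M x := mg_M_monoOn a b hx'U hxU hx'x
      exact lt_of_lt_of_le hx'W this
  have hnull : a ((W \ V) ∪ (V \ W)) = 0 := measure_mono_null hWV (mg_U_compl_null a)
  have haeWV : (W : Set ℝ) =ᵐ[a] V := by
    rw [MeasureTheory.ae_eq_set]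
    exact ⟨measure_mono_null subset_union_left hnull,
      measure_mono_null subset_union_right hnull⟩
  have haeI : ((Set.Ioi s ∩ W : Set ℝ)) =ᵐ[a] (Set.Ioi s ∩ V : Set ℝ) := by
    filter_upwards [haeWV] with x hx
    change (x ∈ Set.Ioi s ∩ W) = (x ∈ Set.Ioi s ∩ V)
    simp only [Set.mem_inter_iff]
    rw [show (x ∈ W) = (x ∈ V) from hx]
  have haW : a W = b (Set.Ioi t) := by
    rw [hW, ← Measure.map_apply (mg_measurable_M a b) measurableSet_Ioi, mg_map_M a b]
  rw [measure_congr haeI]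
  rcases mg_isUpperSet_aux hVup s with hsub | hsub
  · rw [Set.inter_eq_self_of_subset_right hsub]
    have h1 : a V = b (Set.Ioi t) := (measure_congr haeWV).symm.trans haW
    rw [h1]
    have h2 : b (Set.Ioi t) ≤ a (Set.Ioi s) := by
      rw [← h1]; exact measure_mono hsub
    exact (min_eq_right h2).symm
  · rw [Set.inter_eq_self_of_subset_left hsub]
    have h1 : a V = b (Set.Ioi t) := (measure_congr haeWV).symm.trans haW
    have h2 : a (Set.Ioi s) ≤ b (Set.Ioi t) := by
      rw [← h1]; exact measure_mono hsub
    exact (min_eq_left h2).symm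

end MapM
/-- Auxiliary kernel: `mgg x s = 1_{0 ≤ s < x} - 1_{x ≤ s < 0}`. -/
noncomputable def mgg (x s : ℝ) : ℝ :=
  (Set.Ico (0:ℝ) x).indicator 1 s - (Set.Ico x (0:ℝ)).indicator 1 s

lemma mgg_eq (x s : ℝ) :
    mgg x s = (Set.Ioi s).indicator 1 x - (Set.Iio (0:ℝ)).indicator 1 s := by
  unfold mgg
  simp only [Set.indicator_apply, mem_Ico, mem_Ioi, mem_Iio, Pi.one_apply]
  split_ifs <;> simp_all <;> linarith

lemma mg_integrable_indicator_Ico (c d : ℝ) :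
    Integrable ((Set.Ico c d).indicator (1 : ℝ → ℝ)) volume := by
  rw [integrable_indicator_iff measurableSet_Ico]
  refine (integrableOn_const_iff).2 (Or.inr ?_)
  exact measure_Ico_lt_top

lemma mg_integrable_mgg (x : ℝ) : Integrable (mgg x) volume :=
  (mg_integrable_indicator_Ico 0 x).sub (mg_integrable_indicator_Ico x 0)

lemma mg_integral_mgg (x : ℝ) : ∫ s, mgg x s = x := by
  unfold mgg
  rw [integral_sub (mg_integrable_indicator_Ico 0 x) (mg_integrable_indicator_Ico x 0)]
  rw [MeasureTheory.integral_indicator_one measurableSet_Ico,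
    MeasureTheory.integral_indicator_one measurableSet_Ico, measureReal_def, measureReal_def, Real.volume_Ico, Real.volume_Ico,
    ENNReal.toReal_ofReal', ENNReal.toReal_ofReal']
  rcases le_total 0 x with h | h
  · rw [max_eq_left (by linarith), max_eq_right (by linarith)]; ring
  · rw [max_eq_right (by linarith), max_eq_left (by linarith)]; ring

lemma mg_integral_abs_mgg (x : ℝ) : ∫ s, |mgg x s| = |x| := by
  rcases le_total 0 x with h | h
  · have he : Set.Ico x (0:ℝ) = ∅ := Ico_eq_empty (by simpa using h)
    have : ∀ s, |mgg x s| = mgg x s := by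
      intro s
      unfold mgg
      rw [he]
      simp only [Set.indicator_empty, Pi.zero_apply, sub_zero]
      exact abs_of_nonneg (Set.indicator_nonneg (fun _ _ => zero_le_one) s)
    rw [show (fun s => |mgg x s|) = mgg x from funext this, mg_integral_mgg, abs_of_nonneg h]
  · have he : Set.Ico (0:ℝ) x = ∅ := Ico_eq_empty (by simpa using h)
    have : ∀ s, |mgg x s| = - mgg x s := by
      intro s
      unfold mgg
      rw [he]
      simp only [Set.indicator_empty, Pi.zero_apply, zero_sub, abs_neg, neg_neg]
      exact abs_of_nonneg (Set.indicator_nonneg (fun _ _ => zero_le_one) s)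
    rw [show (fun s => |mgg x s|) = (fun s => - mgg x s) from funext this, integral_neg,
      mg_integral_mgg, abs_of_nonpos h]

lemma mg_measurable_mgg2 : Measurable (fun p : ℝ × ℝ => mgg p.1 p.2) := by
  have h1 : (fun p : ℝ × ℝ => (Set.Ico (0:ℝ) p.1).indicator (1:ℝ→ℝ) p.2) =
      ({q : ℝ × ℝ | 0 ≤ q.2 ∧ q.2 < q.1}).indicator (fun _ => (1:ℝ)) := by
    funext p
    by_cases hp : p.2 ∈ Set.Ico (0:ℝ) p.1
    · rw [Set.indicator_of_mem hp, Set.indicator_of_mem (by exact hp)]; rfl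
    · rw [Set.indicator_of_notMem hp, Set.indicator_of_notMem (by exact hp)]
  have h2 : (fun p : ℝ × ℝ => (Set.Ico p.1 (0:ℝ)).indicator (1:ℝ→ℝ) p.2) =
      ({q : ℝ × ℝ | q.1 ≤ q.2 ∧ q.2 < 0}).indicator (fun _ => (1:ℝ)) := by
    funext p
    by_cases hp : p.2 ∈ Set.Ico p.1 (0:ℝ)
    · rw [Set.indicator_of_mem hp, Set.indicator_of_mem (by exact hp)]; rfl
    · rw [Set.indicator_of_notMem hp, Set.indicator_of_notMem (by exact hp)]
  have hB1 : MeasurableSet {q : ℝ × ℝ | 0 ≤ q.2 ∧ q.2 < q.1} :=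
    (measurableSet_le measurable_const measurable_snd).inter
      (measurableSet_lt measurable_snd measurable_fst)
  have hB2 : MeasurableSet {q : ℝ × ℝ | q.1 ≤ q.2 ∧ q.2 < 0} :=
    (measurableSet_le measurable_fst measurable_snd).inter
      (measurableSet_lt measurable_snd measurable_const)
  unfold mgg
  exact (h1 ▸ measurable_const.indicator hB1).sub (h2 ▸ measurable_const.indicator hB2)
section Key

variable (a b : Measure ℝ) [IsProbabilityMeasure a] [IsProbabilityMeasure b]

lemma mg_key (ρ : ℝ → ℝ) (hρ : Measurable ρ)
    (hint : Integrable (fun x => |x| * |ρ x|) a) :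
    (∫ x, x * ρ x ∂a) =
      (∫ st : ℝ × ℝ, (∫ x, mgg x st.1 * mgg (ρ x) st.2 ∂a) ∂(volume.prod volume)) ∧
      Integrable (fun st : ℝ × ℝ => ∫ x, mgg x st.1 * mgg (ρ x) st.2 ∂a)
        (volume.prod volume) := by
  set f : ℝ → ℝ × ℝ → ℝ := fun x st => mgg x st.1 * mgg (ρ x) st.2 with hf
  have hGmeas : Measurable (Function.uncurry f) := by
    refine Measurable.mul ?_ ?_
    · exact mg_measurable_mgg2.comp (measurable_fst.prodMk (measurable_fst.comp measurable_snd))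
    · exact mg_measurable_mgg2.comp ((hρ.comp measurable_fst).prodMk
        (measurable_snd.comp measurable_snd))
  have hGint : Integrable (Function.uncurry f) (a.prod (volume.prod volume)) := by
    rw [integrable_prod_iff hGmeas.aestronglyMeasurable]
    constructor
    · refine ae_of_all _ fun x => ?_
      exact (mg_integrable_mgg x).mul_prod (mg_integrable_mgg (ρ x))
    · have heq : (fun x => ∫ st : ℝ × ℝ, ‖Function.uncurry f (x, st)‖ ∂(volume.prod volume)) =
          fun x => |x| * |ρ x| := by
        funext x
        simp only [Function.uncurry_apply_pair]
        have h1 : (fun st : ℝ × ℝ => ‖f x st‖) =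
            fun st : ℝ × ℝ => |mgg x st.1| * |mgg (ρ x) st.2| := by
          funext st
          simp [hf, Real.norm_eq_abs, abs_mul]
        rw [h1, integral_prod_mul (fun s => |mgg x s|) (fun t => |mgg (ρ x) t|),
          mg_integral_abs_mgg, mg_integral_abs_mgg]
      rw [heq]
      exact hint
  constructor
  · have hswap := integral_integral_swap hGint
    have hinner : ∀ x, (∫ st : ℝ × ℝ, f x st ∂(volume.prod volume)) = x * ρ x := by
      intro x
      rw [show f x = fun st : ℝ × ℝ => mgg x st.1 * mgg (ρ x) st.2 from rfl,
        integral_prod_mul (mgg x) (mgg (ρ x)), mg_integral_mgg, mg_integral_mgg]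
    calc ∫ x, x * ρ x ∂a = ∫ x, (∫ st : ℝ × ℝ, f x st ∂(volume.prod volume)) ∂a := by
          refine integral_congr_ae (ae_of_all _ fun x => (hinner x).symm)
      _ = ∫ st : ℝ × ℝ, (∫ x, f x st ∂a) ∂(volume.prod volume) := hswap
  · exact hGint.integral_prod_right

lemma mg_K_eval (ρ : ℝ → ℝ) (hρ : Measurable ρ) (s t : ℝ) :
    ∫ x, mgg x s * mgg (ρ x) t ∂a =
      (a (Set.Ioi s ∩ ρ ⁻¹' Set.Ioi t)).toReal
      - (Set.Iio (0:ℝ)).indicator 1 t * (a (Set.Ioi s)).toReal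
      - (Set.Iio (0:ℝ)).indicator 1 s * (a (ρ ⁻¹' Set.Ioi t)).toReal
      + (Set.Iio (0:ℝ)).indicator 1 s * (Set.Iio (0:ℝ)).indicator 1 t := by
  set cs := (Set.Iio (0:ℝ)).indicator (1 : ℝ → ℝ) s with hcs
  set ct := (Set.Iio (0:ℝ)).indicator (1 : ℝ → ℝ) t with hct
  have hmeasI : MeasurableSet (Set.Ioi s ∩ ρ ⁻¹' Set.Ioi t) :=
    measurableSet_Ioi.inter (hρ measurableSet_Ioi)
  have hpt : ∀ x, mgg x s * mgg (ρ x) t =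
      (Set.Ioi s ∩ ρ ⁻¹' Set.Ioi t).indicator 1 x - ct * (Set.Ioi s).indicator 1 x
      - cs * (ρ ⁻¹' Set.Ioi t).indicator 1 x + cs * ct := by
    intro x
    rw [mgg_eq, mgg_eq, ← hcs, ← hct]
    have h1 : (Set.Ioi s ∩ ρ ⁻¹' Set.Ioi t).indicator (1 : ℝ → ℝ) x =
        (Set.Ioi s).indicator 1 x * (Set.Ioi t).indicator 1 (ρ x) := by
      by_cases hx1 : x ∈ Set.Ioi s <;> by_cases hx2 : ρ x ∈ Set.Ioi t <;>
        simp [Set.indicator_apply, hx1, hx2, Set.mem_inter_iff, Set.mem_preimage]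
    have h2 : (ρ ⁻¹' Set.Ioi t).indicator (1 : ℝ → ℝ) x =
        (Set.Ioi t).indicator 1 (ρ x) := by
      by_cases hx2 : ρ x ∈ Set.Ioi t <;>
        simp [Set.indicator_apply, hx2, Set.mem_preimage]
    rw [h1, h2]
    ring
  have hi1 : Integrable ((Set.Ioi s ∩ ρ ⁻¹' Set.Ioi t).indicator (1 : ℝ → ℝ)) a :=
    (integrable_const 1).indicator hmeasI
  have hi2 : Integrable ((Set.Ioi s).indicator (1 : ℝ → ℝ)) a :=
    (integrable_const 1).indicator measurableSet_Ioi
  have hi3 : Integrable ((ρ ⁻¹' Set.Ioi t).indicator (1 : ℝ → ℝ)) a :=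
    (integrable_const 1).indicator (hρ measurableSet_Ioi)
  calc ∫ x, mgg x s * mgg (ρ x) t ∂a
      = ∫ x, ((Set.Ioi s ∩ ρ ⁻¹' Set.Ioi t).indicator 1 x - ct * (Set.Ioi s).indicator 1 x
          - cs * (ρ ⁻¹' Set.Ioi t).indicator 1 x + cs * ct) ∂a :=
        integral_congr_ae (ae_of_all _ hpt)
    _ = (a (Set.Ioi s ∩ ρ ⁻¹' Set.Ioi t)).toReal - ct * (a (Set.Ioi s)).toReal
          - cs * (a (ρ ⁻¹' Set.Ioi t)).toReal + cs * ct := by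
        have hIa : Integrable (fun x => (Set.Ioi s ∩ ρ ⁻¹' Set.Ioi t).indicator 1 x
            - ct * (Set.Ioi s).indicator 1 x) a := hi1.sub (hi2.const_mul ct)
        have hIb : Integrable (fun x => (Set.Ioi s ∩ ρ ⁻¹' Set.Ioi t).indicator 1 x
            - ct * (Set.Ioi s).indicator 1 x - cs * (ρ ⁻¹' Set.Ioi t).indicator 1 x) a :=
          hIa.sub (hi3.const_mul cs)
        rw [integral_add hIb (integrable_const _),
          integral_sub hIa (hi3.const_mul cs),
          integral_sub hi1 (hi2.const_mul ct),
          integral_const_mul, integral_const_mul, integral_const,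
          MeasureTheory.integral_indicator_one hmeasI,
          MeasureTheory.integral_indicator_one measurableSet_Ioi,
          MeasureTheory.integral_indicator_one (hρ measurableSet_Ioi), measureReal_def, measureReal_def,
            measureReal_def]
        simp

end Key
lemma mg_int_mul (a : Measure ℝ) [IsProbabilityMeasure a] {f g : ℝ → ℝ}
    (hf2 : Integrable (fun x => f x ^ 2) a) (hg2 : Integrable (fun x => g x ^ 2) a)
    (hfm : AEStronglyMeasurable f a) (hgm : AEStronglyMeasurable g a) :
    Integrable (fun x => f x * g x) a := by
  refine Integrable.mono' ((hf2.add hg2).div_const 2) (hfm.mul hgm) (ae_of_all _ fun x => ?_)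
  rw [Real.norm_eq_abs, abs_mul]
  simp only [Pi.add_apply]
  nlinarith [sq_nonneg (|f x| - |g x|), sq_abs (f x), sq_abs (g x),
    abs_nonneg (f x), abs_nonneg (g x)]

/-- One-dimensional Monge problem for quadratic cost: the monotone
quantile-matching map `M = F_b⁻¹ ∘ F_a` is optimal among all measurable maps
pushing `a` forward to `b`. -/
theorem monotone_map_optimal (a b : Measure ℝ)
    [IsProbabilityMeasure a] [IsProbabilityMeasure b] [NullSingletonClass a]
    (ha2 : Integrable (fun x => x ^ 2) a) (hb2 : Integrable (fun x => x ^ 2) b)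
    (T : ℝ → ℝ) (hT : Measurable T) (hTpush : a.map T = b) :
    ∫ x, |quantile b (cdfF a x) - x| ^ 2 ∂a ≤ ∫ x, |T x - x| ^ 2 ∂a := by
  set M : ℝ → ℝ := fun x => quantile b (cdfF a x) with hMdef
  have hMmeas : Measurable M := mg_measurable_M a b
  have hMpush : a.map M = b := mg_map_M a b
  have hsqm : Measurable (fun y : ℝ => y ^ 2) := measurable_id.pow_const 2
  have hM2 : Integrable (fun x => (M x) ^ 2) a := by
    have h := hb2
    rw [← hMpush] at h
    exact (integrable_map_measure hsqm.aestronglyMeasurable hMmeas.aemeasurable).1 h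
  have hT2 : Integrable (fun x => (T x) ^ 2) a := by
    have h := hb2
    rw [← hTpush] at h
    exact (integrable_map_measure hsqm.aestronglyMeasurable hT.aemeasurable).1 h
  have hidA : AEStronglyMeasurable (fun x : ℝ => x) a := aestronglyMeasurable_id
  have hxM : Integrable (fun x => x * M x) a :=
    mg_int_mul a ha2 hM2 hidA hMmeas.aestronglyMeasurable
  have hxT : Integrable (fun x => x * T x) a :=
    mg_int_mul a ha2 hT2 hidA hT.aestronglyMeasurable
  have hintM : Integrable (fun x => |x| * |M x|) a := by
    simpa [abs_mul] using hxM.abs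
  have hintT : Integrable (fun x => |x| * |T x|) a := by
    simpa [abs_mul] using hxT.abs
  obtain ⟨heqT, hKTint⟩ := mg_key a T hT hintT
  obtain ⟨heqM, hKMint⟩ := mg_key a M hMmeas hintM
  have hcorr : ∫ x, x * T x ∂a ≤ ∫ x, x * M x ∂a := by
    rw [heqT, heqM, ← sub_nonneg, ← integral_sub hKMint hKTint]
    refine integral_nonneg fun st => ?_
    simp only [Pi.sub_apply, Pi.zero_apply]
    rw [mg_K_eval a M hMmeas st.1 st.2, mg_K_eval a T hT st.1 st.2]
    have hbM : a (M ⁻¹' Set.Ioi st.2) = b (Set.Ioi st.2) := by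
      rw [← Measure.map_apply hMmeas measurableSet_Ioi, hMpush]
    have hbT : a (T ⁻¹' Set.Ioi st.2) = b (Set.Ioi st.2) := by
      rw [← Measure.map_apply hT measurableSet_Ioi, hTpush]
    have hle : (a (Set.Ioi st.1 ∩ T ⁻¹' Set.Ioi st.2)).toReal ≤
        (a (Set.Ioi st.1 ∩ M ⁻¹' Set.Ioi st.2)).toReal := by
      refine ENNReal.toReal_mono (measure_ne_top a _) ?_
      rw [mg_min_inter a b st.1 st.2]
      refine le_min (measure_mono inter_subset_left) ?_
      rw [← hbT]
      exact measure_mono inter_subset_right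
    rw [hbM, hbT]
    linarith
  have hW : ∀ (ρ : ℝ → ℝ), Integrable (fun x => (ρ x) ^ 2) a →
      Integrable (fun x => x * ρ x) a →
      ∫ x, |ρ x - x| ^ 2 ∂a =
        (∫ x, (ρ x) ^ 2 ∂a) - 2 * (∫ x, x * ρ x ∂a) + ∫ x, x ^ 2 ∂a := by
    intro ρ h2 hx
    have hIa : Integrable (fun x => (ρ x) ^ 2 - 2 * (x * ρ x)) a := h2.sub (hx.const_mul 2)
    calc ∫ x, |ρ x - x| ^ 2 ∂a = ∫ x, ((ρ x) ^ 2 - 2 * (x * ρ x) + x ^ 2) ∂a := by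
          refine integral_congr_ae (ae_of_all _ fun x => ?_)
          show |ρ x - x| ^ 2 = (ρ x) ^ 2 - 2 * (x * ρ x) + x ^ 2
          rw [sq_abs]; ring
      _ = _ := by
          rw [integral_add hIa ha2, integral_sub h2 (hx.const_mul 2), integral_const_mul]
  have hsameM : ∫ x, (M x) ^ 2 ∂a = ∫ y, y ^ 2 ∂b := by
    have h : ∫ y, y ^ 2 ∂b = ∫ x, (M x) ^ 2 ∂a := by
      rw [← hMpush]
      exact integral_map hMmeas.aemeasurable hsqm.aestronglyMeasurable
    exact h.symm
  have hsameT : ∫ x, (T x) ^ 2 ∂a = ∫ y, y ^ 2 ∂b := by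
    have h : ∫ y, y ^ 2 ∂b = ∫ x, (T x) ^ 2 ∂a := by
      rw [← hTpush]
      exact integral_map hT.aemeasurable hsqm.aestronglyMeasurable
    exact h.symm
  rw [hW M hM2 hxM, hW T hT2 hxT, hsameM, hsameT]
  linarith
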